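/- Let G be a finite directed acyclic graph with canonical layering L_0, L_1, …, L_d, and define the labeling λ that assigns to each irreducible arc (u,v) the single label j, where j is the index with v ∈ L_j, and assigns no labels to non-irreducible arcs. Then every label used by λ lies between 1 and d, and for every pair of vertices u, v there exists a directed temporal path from u to v in (G,λ) if and only if there exists a directed path from u to v in G. -/

import Mathlib

open scoped Classical

variable {V : Type*}

/-- The vertices remaining after `i` rounds of repeatedly deleting all sources
(vertices of in-degree 0) from the digraph with arc relation `r`. -/
def remainAfter (r : V → V → Prop) : ℕ → Set V
  | 0 => Set.univ
  | (i + 1) => {v | v ∈ remainAfter r i ∧ ∃ u ∈ remainAfter r i, r u v}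

/-- The `i`-th layer of the canonical layering of a DAG: the sources of the
subgraph induced on the vertices remaining after `i` peeling rounds. -/
def canonicalLayer (r : V → V → Prop) (i : ℕ) : Set V :=
  {v | v ∈ remainAfter r i ∧ ∀ u ∈ remainAfter r i, ¬ r u v}

/-- The index of the canonical layer containing `v`. -/
noncomputable def layerIndex (r : V → V → Prop) (v : V) : ℕ :=
  sInf {i | v ∈ canonicalLayer r i}

/-- The relation `r` is acyclic: there is no directed cycle. -/
def RelAcyclic (r : V → V → Prop) : Prop :=
  ∀ v, ¬ Relation.TransGen r v v

/-- An arc `(u,v)` is irreducible if the only directed path from `u` to `v` is the arc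
itself, i.e. there is no directed path of length two or more from `u` to `v`. -/
def IrreducibleArc (r : V → V → Prop) (u v : V) : Prop :=
  r u v ∧ ¬ ∃ w, r u w ∧ Relation.TransGen r w v

/-- There is a directed temporal path from `u` to `v`: a directed path whose
consecutive arcs carry strictly increasing time-labels. -/
def DTemporalReach (r : V → V → Prop) (lab : V → V → Finset ℕ) (u v : V) : Prop :=
  ∃ (l : List V) (ts : List ℕ),
    List.Chain r u l ∧
    (u :: l).getLast (List.cons_ne_nil u l) = v ∧
    ts.Chain' (· < ·) ∧
    List.Forall₂ (fun t (p : V × V) => t ∈ lab p.1 p.2) ts ((u :: l).zip l)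

/-- The canonical labeling of a DAG: every irreducible arc `(u,v)` gets the single
label `j`, where `v` lies in layer `L_j`; all other arcs get no label. -/
noncomputable def canonicalLabeling (r : V → V → Prop) (u v : V) : Finset ℕ :=
  if IrreducibleArc r u v then {layerIndex r v} else ∅


variable {r : V → V → Prop} {u v : V} {i j : ℕ}

lemma remainAfter_succ_subset : remainAfter r (i + 1) ⊆ remainAfter r i :=
  fun _ hv => hv.1

lemma remainAfter_antitone (h : i ≤ j) : remainAfter r j ⊆ remainAfter r i := by
  induction j with
  | zero => simp_all
  | succ n ih =>
    rcases Nat.eq_or_lt_of_le h with rfl | h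
    · exact fun _ hv => hv
    · exact fun x hx => ih (Nat.lt_succ_iff.mp h) (remainAfter_succ_subset hx)

lemma mem_remainAfter_succ_of_rel (huv : r u v) :
    ∀ i, u ∈ remainAfter r i → v ∈ remainAfter r (i + 1) := by
  intro i
  induction i with
  | zero => exact fun _ => ⟨trivial, u, trivial, huv⟩
  | succ n ih => exact fun hu => ⟨ih (remainAfter_succ_subset hu), u, hu, huv⟩

lemma exists_chain_of_mem_remainAfter :
    ∀ i, v ∈ remainAfter r i → ∃ l : List V, l.length = i ∧ (l ++ [v]).Chain' r := by
  intro i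
  induction i generalizing v with
  | zero => exact fun _ => ⟨[], rfl, List.isChain_singleton v⟩
  | succ n ih =>
    rintro ⟨_, u, hu, huv⟩
    obtain ⟨l, hlen, hch⟩ := ih (v := u) hu
    refine ⟨l ++ [u], by simp [hlen], ?_⟩
    exact hch.append (List.isChain_singleton v) (by simp [huv])

lemma chain'_nodup (hacyc : RelAcyclic r) {m : List V} (hm : m.Chain' r) : m.Nodup := by
  have h1 : m.Chain' (Relation.TransGen r) := hm.imp fun a b h => Relation.TransGen.single h
  have h2 : m.Pairwise (Relation.TransGen r) := by
    have := by haveI : Trans (Relation.TransGen r) (Relation.TransGen r) (Relation.TransGen r) := ⟨fun a b => Relation.TransGen.trans a b⟩; exact List.isChain_iff_pairwise (R := Relation.TransGen r) (l := m)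
    exact this.mp h1
  exact by
    have h3 : m.Pairwise (· ≠ ·) := h2.imp fun {a b} h => fun heq : a = b => absurd h (by rw [heq]; exact hacyc b)
    exact h3

lemma remainAfter_bound [Fintype V] (hacyc : RelAcyclic r)
    (hv : v ∈ remainAfter r i) : i < Fintype.card V := by
  obtain ⟨l, hlen, hch⟩ := exists_chain_of_mem_remainAfter i hv
  have hnd : (l ++ [v]).Nodup := chain'_nodup hacyc hch
  have := hnd.length_le_card
  simp [hlen] at this
  omega

lemma mem_canonicalLayer_layerIndex [Fintype V] (hacyc : RelAcyclic r) (v : V) :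
    v ∈ canonicalLayer r (layerIndex r v) := by
  have hne : {i | v ∈ canonicalLayer r i}.Nonempty := by
    have hP : ∃ i, v ∉ remainAfter r i :=
      ⟨Fintype.card V, fun h => lt_irrefl _ (remainAfter_bound hacyc h)⟩
    have hk : v ∉ remainAfter r (Nat.find hP) := Nat.find_spec hP
    have hk0 : Nat.find hP ≠ 0 := fun h0 => hk (by rw [h0]; trivial)
    obtain ⟨j, hj⟩ := Nat.exists_eq_succ_of_ne_zero hk0
    have hjin : v ∈ remainAfter r j := by
      by_contra h
      have : Nat.find hP ≤ j := Nat.find_le (h := hP) h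
      omega
    refine ⟨j, hjin, fun u hu hru => ?_⟩
    exact (hj ▸ hk) ⟨hjin, u, hu, hru⟩
  exact Nat.sInf_mem hne

lemma mem_remainAfter_iff_le [Fintype V] (hacyc : RelAcyclic r) :
    v ∈ remainAfter r i ↔ i ≤ layerIndex r v := by
  have hmem := mem_canonicalLayer_layerIndex hacyc v
  constructor
  · intro hv
    by_contra h
    have h1 : layerIndex r v + 1 ≤ i := by omega
    have h2 : v ∈ remainAfter r (layerIndex r v + 1) := remainAfter_antitone h1 hv
    obtain ⟨u, hu, hru⟩ := h2.2
    exact hmem.2 u hu hru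
  · intro h
    exact remainAfter_antitone h hmem.1

lemma layerIndex_lt_of_rel [Fintype V] (hacyc : RelAcyclic r) (huv : r u v) :
    layerIndex r u < layerIndex r v := by
  have hu : u ∈ remainAfter r (layerIndex r u) := (mem_remainAfter_iff_le hacyc).mpr le_rfl
  have hv := mem_remainAfter_succ_of_rel huv _ hu
  have := (mem_remainAfter_iff_le hacyc).mp hv
  omega

lemma layerIndex_lt_of_transGen [Fintype V] (hacyc : RelAcyclic r)
    (h : Relation.TransGen r u v) : layerIndex r u < layerIndex r v := by
  induction h with
  | single h => exact layerIndex_lt_of_rel hacyc h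
  | tail _ h ih => exact ih.trans (layerIndex_lt_of_rel hacyc h)

lemma layerIndex_le_of_reflTransGen [Fintype V] (hacyc : RelAcyclic r)
    (h : Relation.ReflTransGen r u v) : layerIndex r u ≤ layerIndex r v := by
  rcases Relation.reflTransGen_iff_eq_or_transGen.mp h with rfl | h
  · exact le_rfl
  · exact (layerIndex_lt_of_transGen hacyc h).le

lemma exists_irred_first [Fintype V] (hacyc : RelAcyclic r)
    (h : Relation.TransGen r u v) :
    ∃ w, IrreducibleArc r u w ∧ Relation.ReflTransGen r w v := by
  obtain ⟨w0, hw0, hw0v⟩ := Relation.TransGen.head'_iff.mp h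
  have hS : w0 ∈ Finset.univ.filter (fun w => r u w ∧ Relation.ReflTransGen r w v) := by
    simp [hw0, hw0v]
  obtain ⟨w, hwS, hmin⟩ := Finset.exists_min_image _ (layerIndex r) ⟨w0, hS⟩
  rw [Finset.mem_filter] at hwS
  obtain ⟨-, hr, hrt⟩ := hwS
  refine ⟨w, ⟨hr, ?_⟩, hrt⟩
  rintro ⟨x, hux, hxw⟩
  have hx : x ∈ Finset.univ.filter (fun w => r u w ∧ Relation.ReflTransGen r w v) := by
    simp [hux, hxw.to_reflTransGen.trans hrt]
  have h1 := hmin x hx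
  have h2 := layerIndex_lt_of_transGen hacyc hxw
  omega

lemma exists_irred_chain [Fintype V] (hacyc : RelAcyclic r) :
    ∀ n (u v : V), layerIndex r v ≤ layerIndex r u + n → Relation.TransGen r u v →
    ∃ l : List V, List.Chain (IrreducibleArc r) u l ∧
      (u :: l).getLast (List.cons_ne_nil u l) = v := by
  intro n
  induction n with
  | zero =>
    intro u v hle h
    exact absurd (layerIndex_lt_of_transGen hacyc h) (by omega)
  | succ n ih =>
    intro u v hle h
    obtain ⟨w, hirr, hwv⟩ := exists_irred_first hacyc h
    rcases Relation.reflTransGen_iff_eq_or_transGen.mp hwv with rfl | htg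
    · exact ⟨[v], List.chain_cons.mpr ⟨hirr, List.Chain.nil⟩, by simp⟩
    · have h2 : layerIndex r v ≤ layerIndex r w + n := by
        have := layerIndex_lt_of_rel hacyc hirr.1
        omega
      obtain ⟨l, hch, hlast⟩ := ih w v h2 htg
      refine ⟨w :: l, List.chain_cons.mpr ⟨hirr, hch⟩, ?_⟩
      rw [List.getLast_cons (List.cons_ne_nil w l)]
      exact hlast

lemma forall2_labels [Fintype V] :
    ∀ (l : List V) (u : V), List.Chain (IrreducibleArc r) u l →
    List.Forall₂ (fun t (p : V × V) => t ∈ canonicalLabeling r p.1 p.2)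
      (l.map (layerIndex r)) ((u :: l).zip l) := by
  intro l
  induction l with
  | nil => intro u _; simp
  | cons a l ih =>
    intro u hch
    simp only [List.Chain, List.isChain_cons_cons] at hch
    simp only [List.map_cons, List.zip_cons_cons]
    exact List.Forall₂.cons (by simp [canonicalLabeling, hch.1]) (ih a hch.2)

lemma chain'_ts [Fintype V] (hacyc : RelAcyclic r) (l : List V) (u : V)
    (hch : List.Chain (IrreducibleArc r) u l) :
    (l.map (layerIndex r)).Chain' (· < ·) := by
  have h1 : List.Chain' r (u :: l) := List.IsChain.imp (fun a b hh => hh.1) hch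
  have h2 : List.Chain' r l := h1.tail
  exact (List.isChain_map _).mpr (List.IsChain.imp (fun a b hh => layerIndex_lt_of_rel hacyc hh) h2)

lemma dtemporal_of_reflTransGen [Fintype V] (hacyc : RelAcyclic r)
    (h : Relation.ReflTransGen r u v) :
    DTemporalReach r (canonicalLabeling r) u v := by
  rcases Relation.reflTransGen_iff_eq_or_transGen.mp h with rfl | htg
  · exact ⟨[], [], List.Chain.nil, rfl, List.isChain_nil, by simp⟩
  · obtain ⟨l, hch, hlast⟩ :=
      exists_irred_chain hacyc (layerIndex r v) u v (by omega) htg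
    exact ⟨l, l.map (layerIndex r), List.IsChain.imp (fun a b hh => hh.1) hch, hlast,
      chain'_ts hacyc l u hch, forall2_labels l u hch⟩

/-- For a finite DAG with canonical layering `L_0, …, L_d`, every label used by the
canonical labeling lies between `1` and `d`, and it admits a directed temporal path
from `u` to `v` iff the DAG has a directed path from `u` to `v`. -/
theorem stmt10 [Fintype V] (r : V → V → Prop) (hacyc : RelAcyclic r) :
    (∀ u v : V, ∀ t ∈ canonicalLabeling r u v,
        1 ≤ t ∧ t ≤ Finset.univ.sup (layerIndex r)) ∧
    (∀ u v : V, DTemporalReach r (canonicalLabeling r) u v ↔ Relation.ReflTransGen r u v) := by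
  constructor
  · intro u v t ht
    unfold canonicalLabeling at ht
    split at ht
    · next hirr =>
      rw [Finset.mem_singleton] at ht
      subst ht
      refine ⟨?_, Finset.le_sup (Finset.mem_univ v)⟩
      have := layerIndex_lt_of_rel hacyc hirr.1
      omega
    · simp at ht
  · intro u v
    constructor
    · rintro ⟨l, ts, hch, hlast, -, -⟩
      exact List.relationReflTransGen_of_exists_isChain_cons l hch hlast
    · exact dtemporal_of_reflTransGen hacyc
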